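/- arXiv:2110.07268 — 5 statements merged into one kernel-verified Lean document; each statement's English description precedes it below -/
import Mathlib

section
/- Let X and Y be metric spaces, Φ : X ⇉ Y, φ : X → ℝ ∪ {+∞}, ȳ ∈ Y, U ⊂ X with U ∩ Φ⁻¹(ȳ) ∩ dom φ ≠ ∅. Define S : Y ⇉ X by S(y) := Φ⁻¹(y) ∩ U. If φ is lower semicontinuous on U relative to the set Φ⁻¹(ȳ) and S is upper semicontinuous at ȳ, then φ is lower semicontinuous on U relative to the mapping Φ at ȳ: inf_{u∈Φ⁻¹(ȳ)∩U} φ(u) ≤ liminf_{k→∞} φ(x_k) for all sequences {(x_k, y_k)} ⊂ X × Y with y_k → ȳ, dist_{gph Φ}(x_k, y_k) → 0, and {x_k} + ρ𝔹 ⊂ U for some ρ > 0. -/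
open Filter Metric Set Topology

/-- `φ` is lower semicontinuous on `U` relative to the set `Ω`
(sequential characterization). -/
noncomputable def RelLSCSeq {X : Type*} [MetricSpace X] (φ : X → EReal) (Ω U : Set X) : Prop :=
  ∀ (x : ℕ → X) (ρ : ℝ), 0 < ρ → (∀ k, Metric.ball (x k) ρ ⊆ U) →
    Filter.Tendsto (fun k => Metric.infDist (x k) Ω) Filter.atTop (nhds 0) →
    (⨅ u ∈ Ω ∩ U, φ u) ≤ Filter.liminf (fun k => φ (x k)) Filter.atTop

/-- Proposition 3.11 (a): if `φ` is lower semicontinuous on `U` relative to the set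
`Φ⁻¹(y₀)` and `S(y) := Φ⁻¹(y) ∩ U` is upper semicontinuous at `y₀`, then `φ` is lower
semicontinuous on `U` relative to the mapping `Φ` at `y₀` (sequential form;
the product `X × Y` carries the maximum distance). -/
theorem relLSC_map_of_set_and_usc {X Y : Type*} [MetricSpace X] [MetricSpace Y]
    (Φ : X → Set Y) (φ : X → EReal) (y₀ : Y) (U : Set X)
    (hbot : ∀ x, φ x ≠ ⊥)
    (hne : (U ∩ {x | y₀ ∈ Φ x} ∩ {x | φ x ≠ ⊤}).Nonempty)
    (hrel : RelLSCSeq φ {x | y₀ ∈ Φ x} U)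
    (husc : ∀ ε : ℝ, 0 < ε → ∃ δ : ℝ, 0 < δ ∧ ∀ y : Y, dist y y₀ < δ →
      ∀ x : X, y ∈ Φ x → x ∈ U →
        Metric.infDist x ({x' | y₀ ∈ Φ x'} ∩ U) < ε) :
    ∀ (x : ℕ → X) (y : ℕ → Y) (ρ : ℝ), 0 < ρ → (∀ k, Metric.ball (x k) ρ ⊆ U) →
      Filter.Tendsto y Filter.atTop (nhds y₀) →
      Filter.Tendsto (fun k => Metric.infDist (x k, y k) {p : X × Y | p.2 ∈ Φ p.1})
        Filter.atTop (nhds 0) →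
      (⨅ u ∈ {x | y₀ ∈ Φ x} ∩ U, φ u) ≤
        Filter.liminf (fun k => φ (x k)) Filter.atTop := by
  intro x y ρ hρ hball hy hdist
  set Ω : Set X := {x | y₀ ∈ Φ x} with hΩdef
  set G : Set (X × Y) := {p : X × Y | p.2 ∈ Φ p.1} with hGdef
  obtain ⟨a₀, ⟨ha₀U, ha₀Ω⟩, -⟩ := hne
  have hΩU : (Ω ∩ U).Nonempty := ⟨a₀, ha₀Ω, ha₀U⟩
  have hG : G.Nonempty := ⟨(a₀, y₀), ha₀Ω⟩
  have key : Tendsto (fun k => Metric.infDist (x k) (Ω ∩ U)) atTop (nhds 0) := by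
    rw [Metric.tendsto_nhds]
    intro ε hε
    obtain ⟨δ, hδ, hδ'⟩ := husc (ε / 2) (half_pos hε)
    set c := min ρ (min (δ / 2) (ε / 2)) with hc
    have hc0 : 0 < c := lt_min hρ (lt_min (half_pos hδ) (half_pos hε))
    have h1 : ∀ᶠ k in atTop, dist (y k) y₀ < δ / 2 := by
      have := hy (Metric.ball_mem_nhds y₀ (half_pos hδ))
      filter_upwards [this] with k hk
      simpa [Metric.mem_ball] using hk
    have h2 : ∀ᶠ k in atTop, Metric.infDist (x k, y k) G < c := by
      have := hdist (Metric.ball_mem_nhds (0 : ℝ) hc0)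
      filter_upwards [this] with k hk
      have : |Metric.infDist (x k, y k) G| < c := by
        simpa [Metric.mem_ball, Real.dist_eq] using hk
      exact lt_of_le_of_lt (le_abs_self _) this
    filter_upwards [h1, h2] with k hk1 hk2
    obtain ⟨⟨a, b⟩, hab, habd⟩ := (Metric.infDist_lt_iff hG).mp hk2
    have hxa : dist (x k) a < c :=
      lt_of_le_of_lt (by rw [Prod.dist_eq]; exact le_max_left _ _ : dist (x k) a ≤ dist ((x k, y k)) ((a, b))) habd
    have hyb : dist (y k) b < c :=
      lt_of_le_of_lt (by rw [Prod.dist_eq]; exact le_max_right _ _ : dist (y k) b ≤ dist ((x k, y k)) ((a, b))) habd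
    have haU : a ∈ U := hball k (by
      simpa [Metric.mem_ball, dist_comm] using lt_of_lt_of_le hxa (min_le_left _ _))
    have hbd : dist b y₀ < δ := by
      have h3 : dist (y k) b < δ / 2 :=
        lt_of_lt_of_le hyb (le_trans (min_le_right _ _) (min_le_left _ _))
      calc dist b y₀ ≤ dist b (y k) + dist (y k) y₀ := dist_triangle _ _ _
        _ < δ / 2 + δ / 2 := by rw [dist_comm]; exact add_lt_add h3 hk1
        _ = δ := add_halves δ
    have hda : Metric.infDist a (Ω ∩ U) < ε / 2 := hδ' b hbd a hab haU
    have hfinal : Metric.infDist (x k) (Ω ∩ U) < ε := by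
      calc Metric.infDist (x k) (Ω ∩ U)
          ≤ Metric.infDist a (Ω ∩ U) + dist (x k) a :=
            Metric.infDist_le_infDist_add_dist
        _ < ε / 2 + ε / 2 := add_lt_add hda
            (lt_of_lt_of_le hxa (le_trans (min_le_right _ _) (min_le_right _ _)))
        _ = ε := add_halves ε
    rw [Real.dist_eq, sub_zero, abs_of_nonneg Metric.infDist_nonneg]
    exact hfinal
  have key2 : Tendsto (fun k => Metric.infDist (x k) Ω) atTop (nhds 0) :=
    squeeze_zero (fun k => Metric.infDist_nonneg)
      (fun k => Metric.infDist_le_infDist_of_subset inter_subset_left hΩU) key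
  exact hrel x ρ hρ hball key2
end

section
/- Let X be a complete metric space, Y a metric space, Φ : X ⇉ Y with closed graph, φ : X → ℝ ∪ {+∞} lower semicontinuous, ȳ ∈ Y, x̄ ∈ dom φ ∩ Φ⁻¹(ȳ), δ > 0, and U ⊃ B_δ(x̄). Assume on U the function φ is bounded from below and lower semicontinuous relative to Φ at ȳ, and that x̄ is an ε-minimal point of φ restricted to Φ⁻¹(ȳ) on U for some ε > 0. Then there is δ₀ ∈ (0, δ) such that for each δ' ∈ (δ₀, δ) and each η > 0, there exist points x̂ ∈ B_{δ'}(x̄), ŷ ∈ B_η(ȳ) with dist_{gph Φ}(x̂, ŷ) < η, and numbers γ > 0, γ₁ > 0 such that with φ_γ(x, y) := φ(x) + γ(d(y, ȳ) + dist_{gph Φ}(x, y)), one has φ_γ(x̂, ŷ) + γ₁ d(x̂, x̄)² ≤ φ(x̄) and the slope bound limsup_{(x,y)→(x̂,ŷ)} (φ_γ(x̂,ŷ) − φ_γ(x,y))/d((x,y),(x̂,ŷ)) < 2ε/δ. -/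
/-!
Take `ŷ = y₀` and work on the closed ball `B̄_{δ'}(x₀) ⊆ U`, where `φ_γ(x, y₀) = φ(x) + γ D(x)`
with `D(x) = dist_{gph Φ}(x, y₀)`. If no penalty `γ₀` gave `φ + γ₀ D ≥ φ(x₀) - ε` on the ball,
points violating it for `γ₀ = k + 1` would have `D → 0` and `φ < φ(x₀) - ε`, against relative
lower semicontinuity and `ε`-minimality. Ekeland's variational principle with slope
`λ = 4ε/(3δ)`, applied to `φ + γ D` for a large `γ ≥ γ₀`, then gives `x̂` with `λ d(x̂, x₀) ≤ ε`,
i.e. `d(x̂, x₀) ≤ 3δ/4`, with `D(x̂) < η`, and at which `φ_γ` decreases with slope at most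
`λ < 2ε/δ`. The quadratic term is absorbed by the Ekeland inequality: `γ₁ d² ≤ λ d` for
`γ₁ = λ/δ`.
-/

open Filter Metric Set Topology

/-- The graph of a set-valued mapping `Φ : X ⇉ Y`. -/
def gphSet {X Y : Type*} (Φ : X → Set Y) : Set (X × Y) := {p : X × Y | p.2 ∈ Φ p.1}

/-- The auxiliary function `φ_γ(x, y) := φ(x) + γ (d(y, y₀) + dist_{gph Φ}(x, y))`. -/
noncomputable def phiGamma {X Y : Type*} [MetricSpace X] [MetricSpace Y]
    (φ : X → EReal) (Φ : X → Set Y) (y₀ : Y) (γ : ℝ) (x : X) (y : Y) : EReal :=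
  φ x + (((γ * (dist y y₀ + Metric.infDist (x, y) (gphSet Φ))) : ℝ) : EReal)

section Ekeland

variable {α : Type*} [PseudoMetricSpace α]

def ekelandSet (f : α → ℝ) (l : ℝ) (x : α) : Set α := {z | f z + l * dist z x ≤ f x}

variable {f : α → ℝ} {l : ℝ}

theorem self_mem_ekelandSet (x : α) : x ∈ ekelandSet f l x := by
  simp [ekelandSet]

theorem ekelandSet_subset (hl : 0 ≤ l) {x y : α} (hy : y ∈ ekelandSet f l x) :
    ekelandSet f l y ⊆ ekelandSet f l x := fun z hz => by
  have := dist_triangle z y x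
  simp only [ekelandSet, mem_ofPred_eq] at *
  nlinarith

theorem isClosed_ekelandSet (hf : LowerSemicontinuous f) (x : α) :
    IsClosed (ekelandSet f l x) :=
  (hf.add (continuous_const.mul (continuous_id.dist continuous_const)).lowerSemicontinuous
    ).isClosed_preimage (f x)

theorem apply_le_of_mem_ekelandSet (hl : 0 ≤ l) {x z : α} (hz : z ∈ ekelandSet f l x) :
    f z ≤ f x :=
  (le_add_of_nonneg_right (mul_nonneg hl dist_nonneg)).trans hz

theorem exists_mem_ekelandSet_forall_le_add (hbdd : BddBelow (range f)) (x : α) {e : ℝ}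
    (he : 0 < e) : ∃ z ∈ ekelandSet f l x, ∀ w ∈ ekelandSet f l x, f z ≤ f w + e := by
  have hne : (f '' ekelandSet f l x).Nonempty := ⟨f x, x, self_mem_ekelandSet x, rfl⟩
  obtain ⟨_, ⟨z, hz, rfl⟩, hlt⟩ := exists_lt_of_csInf_lt hne (lt_add_of_pos_right _ he)
  exact ⟨z, hz, fun w hw =>
    hlt.le.trans (by gcongr; exact csInf_le (hbdd.mono (image_subset_range _ _)) ⟨w, hw, rfl⟩)⟩

theorem mul_dist_le_of_forall_le_add (hl : 0 ≤ l) {x z w : α} {e : ℝ}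
    (hz : z ∈ ekelandSet f l x) (hmin : ∀ w ∈ ekelandSet f l x, f z ≤ f w + e)
    (hw : w ∈ ekelandSet f l z) : l * dist w z ≤ e := by
  have := hmin w (ekelandSet_subset hl hz hw)
  simp only [ekelandSet, mem_ofPred_eq] at hw
  linarith

theorem LowerSemicontinuous.exists_forall_le_add_dist [CompleteSpace α]
    (hf : LowerSemicontinuous f) (hbdd : BddBelow (range f)) (x₀ : α) (hl : 0 < l) :
    ∃ z, f z + l * dist z x₀ ≤ f x₀ ∧ ∀ x, f z ≤ f x + l * dist x z := by
  have hgeom : Tendsto (fun n : ℕ => (1 / 2 : ℝ) ^ n) atTop (𝓝 0) :=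
    tendsto_pow_atTop_nhds_zero_of_lt_one (by norm_num) (by norm_num)
  choose next hnext_mem hnext_min using fun (n : ℕ) x =>
    exists_mem_ekelandSet_forall_le_add (l := l) hbdd x (pow_pos one_half_pos n)
  let u : ℕ → α := fun n => Nat.rec x₀ next n
  have hu : Antitone fun n => ekelandSet f l (u n) :=
    antitone_nat_of_succ_le fun n => ekelandSet_subset hl.le (hnext_mem n (u n))
  have hmem : ∀ {n m}, n ≤ m → u m ∈ ekelandSet f l (u n) := fun h => hu h (self_mem_ekelandSet _)
  have hcauchy : CauchySeq fun n => u (n + 1) := by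
    refine cauchySeq_of_le_tendsto_0' (fun n => (1 / 2) ^ n / l) (fun n m hnm => ?_)
      (by simpa using hgeom.div_const l)
    rw [dist_comm, le_div_iff₀' hl]
    exact mul_dist_le_of_forall_le_add hl.le (hnext_mem n (u n)) (hnext_min n (u n))
      (hmem (by omega : n + 1 ≤ m + 1))
  obtain ⟨z, hz⟩ := cauchySeq_tendsto_of_complete hcauchy
  have hzmem : ∀ n, z ∈ ekelandSet f l (u n) := fun n =>
    (isClosed_ekelandSet hf _).mem_of_tendsto hz
      (eventually_atTop.2 ⟨n, fun m hm => hmem (by omega : n ≤ m + 1)⟩)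
  refine ⟨z, hzmem 0, fun x => le_of_not_gt fun hx => ?_⟩
  have hxz : x ∈ ekelandSet f l z := hx.le
  have hle : ∀ n : ℕ, f z ≤ f x + (1 / 2) ^ n := fun n =>
    (apply_le_of_mem_ekelandSet hl.le (hzmem (n + 1))).trans
      (hnext_min n (u n) x (ekelandSet_subset hl.le (hzmem n) hxz))
  have : f z ≤ f x := ge_of_tendsto' (by simpa using tendsto_const_nhds.add hgeom) hle
  nlinarith [dist_nonneg (x := x) (y := z)]

theorem LowerSemicontinuousOn.exists_forall_le_add_dist [CompleteSpace α] {s : Set α}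
    (hf : LowerSemicontinuousOn f s) (hs : IsClosed s) (hbdd : BddBelow (f '' s)) {x₀ : α}
    (hx₀ : x₀ ∈ s) (hl : 0 < l) :
    ∃ z ∈ s, f z + l * dist z x₀ ≤ f x₀ ∧ ∀ x ∈ s, f z ≤ f x + l * dist x z := by
  have := hs.completeSpace_coe
  obtain ⟨z, hz₀, hz⟩ := (lowerSemicontinuous_restrict_iff.2 hf).exists_forall_le_add_dist
    (by rwa [range_domRestrict]) ⟨x₀, hx₀⟩ hl
  exact ⟨z, z.2, hz₀, fun x hx => hz ⟨x, hx⟩⟩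

end Ekeland

namespace EReal

/-- `toReal` sends both `⊥` and `⊤` to `0`; clamping first keeps it monotone, so lower
semicontinuity survives. -/
noncomputable def clampToReal (a b : ℝ) (t : EReal) : ℝ := (t ⊓ b ⊔ a).toReal

variable {a b : ℝ}

theorem coe_clampToReal (hab : a ≤ b) (t : EReal) : (clampToReal a b t : EReal) = t ⊓ b ⊔ a :=
  coe_toReal (sup_le inf_le_right (EReal.coe_le_coe_iff.2 hab) |>.trans_lt (coe_lt_top b)).ne
    ((bot_lt_coe a).trans_le le_sup_right).ne'

theorem le_clampToReal (hab : a ≤ b) (t : EReal) : a ≤ clampToReal a b t := by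
  rw [← EReal.coe_le_coe_iff, coe_clampToReal hab]
  exact le_sup_right

theorem coe_clampToReal_le (hab : a ≤ b) {t : EReal} (ht : a ≤ t) :
    (clampToReal a b t : EReal) ≤ t := by
  rw [coe_clampToReal hab]
  exact sup_le inf_le_left ht

theorem coe_clampToReal_of_lt (hab : a ≤ b) {t : EReal} (ht : a ≤ t) (h : clampToReal a b t < b) :
    (clampToReal a b t : EReal) = t := by
  rw [← EReal.coe_lt_coe_iff, coe_clampToReal hab] at h
  rw [coe_clampToReal hab]
  rcases le_total t b with htb | htb <;> simp_all

theorem clampToReal_coe {r : ℝ} (ha : a ≤ r) (hb : r ≤ b) : clampToReal a b r = r := by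
  simp [clampToReal, ha, hb]

theorem le_clampToReal_add (hab : a ≤ b) {c s : ℝ} {t : EReal} (hcb : c ≤ b) (hs : 0 ≤ s)
    (h : (c : EReal) ≤ t + s) : c ≤ clampToReal a b t + s := by
  rw [← EReal.coe_le_coe_iff, coe_add, coe_clampToReal hab]
  calc (c : EReal) ≤ min (t + s) (b + s) := le_min h (by exact_mod_cast by linarith)
    _ = t ⊓ b + s := min_add_add_right _ _ _
    _ ≤ t ⊓ b ⊔ a + s := by gcongr; exact le_sup_left

theorem monotone_clampToReal (hab : a ≤ b) : Monotone (clampToReal a b) := fun s t hst => by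
  rw [← EReal.coe_le_coe_iff, coe_clampToReal hab, coe_clampToReal hab]
  gcongr

theorem continuous_clampToReal (hab : a ≤ b) : Continuous (clampToReal a b) := by
  refine continuous_iff_continuousAt.2 fun t => ?_
  have hclamp : Continuous fun t : EReal => t ⊓ b ⊔ a :=
    (continuous_id.min continuous_const).max continuous_const
  have hne : t ⊓ b ⊔ a ≠ ⊤ ∧ t ⊓ b ⊔ a ≠ ⊥ := by
    rw [← coe_clampToReal hab]; exact ⟨coe_ne_top _, coe_ne_bot _⟩
  exact (tendsto_toReal hne.1 hne.2).comp (hclamp.tendsto t)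

end EReal

theorem exists_forall_le_add_mul_of_le_liminf {X : Type*} {f : X → EReal} {D : X → ℝ}
    {s : Set X} {c a : ℝ} {m : EReal} (hD : ∀ x ∈ s, 0 ≤ D x) (hc : ∀ x ∈ s, (c : EReal) ≤ f x)
    (hlim : ∀ u : ℕ → X, (∀ k, u k ∈ s) → Tendsto (fun k => D (u k)) atTop (𝓝 0) →
      m ≤ liminf (fun k => f (u k)) atTop)
    (ha : (a : EReal) < m) : ∃ γ > 0, ∀ x ∈ s, (a : EReal) ≤ f x + (γ * D x : ℝ) := by
  by_contra! h
  choose u hu hlt using fun k : ℕ => h ((k : ℝ) + 1) (by positivity)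
  have hDu : ∀ k : ℕ, D (u k) ≤ (a - c) * (1 / ((k : ℝ) + 1)) := fun k => by
    have : c + ((k : ℝ) + 1) * D (u k) < a := by
      exact_mod_cast (add_le_add_left (hc _ (hu k)) _).trans_lt (hlt k)
    rw [mul_one_div, le_div_iff₀ (by positivity)]
    linarith
  have hlim_u := hlim u hu <| squeeze_zero (fun k => hD _ (hu k)) hDu <| by
    simpa using tendsto_one_div_add_atTop_nhds_zero_nat.const_mul (a - c)
  have hfu : ∀ k, f (u k) ≤ a := fun k =>
    (le_add_of_nonneg_right (EReal.coe_nonneg.2 (by have := hD _ (hu k); positivity))).trans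
      (hlt k).le
  exact ha.not_ge (hlim_u.trans (liminf_le_of_frequently_le (Frequently.of_forall hfu)))

theorem exists_penalized_ekeland_point {X : Type*} [PseudoMetricSpace X] [CompleteSpace X]
    {f D : X → ℝ} {s : Set X} {x₀ : X} {c ε γ₀ l η : ℝ}
    (hf : LowerSemicontinuousOn f s) (hD : ContinuousOn D s) (hD0 : ∀ x ∈ s, 0 ≤ D x)
    (hDx₀ : D x₀ = 0) (hs : IsClosed s) (hx₀ : x₀ ∈ s) (hc : ∀ x ∈ s, c ≤ f x)
    (hpen : ∀ x ∈ s, f x₀ - ε ≤ f x + γ₀ * D x) (hγ₀ : 0 < γ₀) (hl : 0 < l) (hη : 0 < η) :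
    ∃ γ > 0, ∃ x₁ ∈ s, l * dist x₁ x₀ ≤ ε ∧ D x₁ < η ∧
      f x₁ + γ * D x₁ + l * dist x₁ x₀ ≤ f x₀ ∧
      ∀ x ∈ s, f x₁ + γ * D x₁ ≤ f x + γ * D x + l * dist x x₁ := by
  -- `γ * D x₁ ≤ f x₀ - c` at the Ekeland point, so this choice forces `D x₁ < η`
  set γ := max γ₀ ((f x₀ - c + 1) / η)
  have hγ₀γ : γ₀ ≤ γ := le_max_left _ _
  have hγ : 0 < γ := hγ₀.trans_le hγ₀γ
  have hF : LowerSemicontinuousOn (fun x => f x + γ * D x) s :=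
    hf.add (continuousOn_const.mul hD).lowerSemicontinuousOn
  have hFc : BddBelow ((fun x => f x + γ * D x) '' s) := ⟨c, by
    rintro _ ⟨x, hx, rfl⟩
    nlinarith [hD0 x hx, hc x hx]⟩
  obtain ⟨x₁, hx₁, hval, hmin⟩ := hF.exists_forall_le_add_dist hs hFc hx₀ hl
  simp only [hDx₀, mul_zero, add_zero] at hval
  have hdist := mul_nonneg hl.le (dist_nonneg (x := x₁) (y := x₀))
  have hDx₁ := hD0 x₁ hx₁
  refine ⟨γ, hγ, x₁, hx₁, ?_, ?_, hval, hmin⟩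
  · nlinarith [hpen x₁ hx₁, mul_le_mul_of_nonneg_right hγ₀γ hDx₁]
  · by_contra! hηD
    have : (f x₀ - c + 1) / η * η ≤ γ * D x₁ := mul_le_mul (le_max_right _ _) hηD hη.le hγ.le
    rw [div_mul_cancel₀ _ hη.ne'] at this
    linarith [hc x₁ hx₁]

theorem limsup_slope_le_of_eventually_le {Z : Type*} [MetricSpace Z] {g : Z → EReal} {z : Z}
    {B : ℝ} (h : ∀ᶠ p in 𝓝 z, g z ≤ g p + (B * dist p z : ℝ)) :
    limsup (fun p => (g z - g p) / (dist p z : EReal)) (𝓝[≠] z) ≤ B := by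
  refine limsup_le_of_le isCobounded_le_of_bot ?_
  filter_upwards [nhdsWithin_le_nhds h, self_mem_nhdsWithin] with p hp hpz
  rw [EReal.div_le_iff_le_mul (by exact_mod_cast dist_pos.2 hpz) (EReal.coe_ne_top _),
    ← EReal.coe_mul, mul_comm]
  exact EReal.sub_le_of_le_add' hp

section PhiGamma

variable {X Y : Type*} [MetricSpace X] [MetricSpace Y]

theorem infDist_le_dist_add_infDist (s : Set (X × Y)) (x : X) (y y₀ : Y) :
    infDist (x, y₀) s ≤ dist y y₀ + infDist (x, y) s := by
  have := infDist_le_infDist_add_dist (x := (x, y₀)) (y := (x, y)) (s := s)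
  rw [dist_prod_same_left, dist_comm] at this
  linarith

theorem limsup_slope_phiGamma_le {φ : X → EReal} {Φ : X → Set Y} {y₀ : Y} {γ l : ℝ}
    {f : X → ℝ} {s : Set X} {x₁ : X} (hs : s ∈ 𝓝 x₁) (hγ : 0 ≤ γ) (hl : 0 ≤ l)
    (hf : ∀ x ∈ s, (f x : EReal) ≤ φ x) (hfx₁ : φ x₁ = f x₁)
    (hmin : ∀ x ∈ s, f x₁ + γ * infDist (x₁, y₀) (gphSet Φ) ≤
      f x + γ * infDist (x, y₀) (gphSet Φ) + l * dist x x₁) :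
    limsup (fun p : X × Y => (phiGamma φ Φ y₀ γ x₁ y₀ - phiGamma φ Φ y₀ γ p.1 p.2) /
      (dist p (x₁, y₀) : EReal)) (𝓝[≠] (x₁, y₀)) ≤ l := by
  refine limsup_slope_le_of_eventually_le (g := fun p : X × Y => phiGamma φ Φ y₀ γ p.1 p.2) ?_
  filter_upwards [continuous_fst.continuousAt.preimage_mem_nhds hs] with ⟨x, y⟩ hx
  have hdist : dist x x₁ ≤ dist (x, y) (x₁, y₀) := by
    rw [Prod.dist_eq]; exact le_max_left _ _
  calc phiGamma φ Φ y₀ γ x₁ y₀ = ((f x₁ + γ * infDist (x₁, y₀) (gphSet Φ) : ℝ) : EReal) := by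
        simp [phiGamma, hfx₁]
    _ ≤ ((f x + γ * infDist (x, y₀) (gphSet Φ) + l * dist (x, y) (x₁, y₀) : ℝ) : EReal) :=
        EReal.coe_le_coe ((hmin x hx).trans (by gcongr))
    _ ≤ phiGamma φ Φ y₀ γ x y + (l * dist (x, y) (x₁, y₀) : ℝ) := by
        rw [EReal.coe_add, EReal.coe_add, phiGamma]
        gcongr
        · exact hf x hx
        · exact infDist_le_dist_add_infDist _ x y y₀

theorem exists_small_slope_point_of_penalty [CompleteSpace X] {Φ : X → Set Y}
    {φ : X → EReal} {y₀ : Y} {x₀ : X} {c r₀ ε δ δ' η γ₀ : ℝ} (hlsc : LowerSemicontinuous φ)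
    (hfeas : y₀ ∈ Φ x₀) (hr₀ : φ x₀ = r₀) (hc : ∀ x ∈ closedBall x₀ δ', (c : EReal) ≤ φ x)
    (hpen : ∀ x ∈ closedBall x₀ δ',
      ((r₀ - ε : ℝ) : EReal) ≤ φ x + (γ₀ * infDist (x, y₀) (gphSet Φ) : ℝ))
    (hγ₀ : 0 < γ₀) (hε : 0 < ε) (hδ : 0 < δ) (hδ' : 3 * δ / 4 < δ') (hη : 0 < η) :
    ∃ x₁ ∈ ball x₀ δ', ∃ y₁ ∈ ball y₀ η, infDist (x₁, y₁) (gphSet Φ) < η ∧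
      ∃ γ : ℝ, 0 < γ ∧ ∃ γ₁ : ℝ, 0 < γ₁ ∧
        phiGamma φ Φ y₀ γ x₁ y₁ + ((γ₁ * dist x₁ x₀ ^ 2 : ℝ) : EReal) ≤ φ x₀ ∧
        limsup (fun p : X × Y => (phiGamma φ Φ y₀ γ x₁ y₁ - phiGamma φ Φ y₀ γ p.1 p.2) /
          (dist p (x₁, y₁) : EReal)) (𝓝[≠] (x₁, y₁)) < ((2 * ε / δ : ℝ) : EReal) := by
  have hx₀s : x₀ ∈ closedBall x₀ δ' := mem_closedBall_self (by linarith)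
  have hcr₀ : c ≤ r₀ := EReal.coe_le_coe_iff.1 (hr₀ ▸ hc x₀ hx₀s)
  have hcR : c ≤ r₀ + 1 := by linarith
  set f : X → ℝ := fun x => EReal.clampToReal c (r₀ + 1) (φ x)
  have hfx₀ : f x₀ = r₀ := by
    simp only [f, hr₀]
    exact EReal.clampToReal_coe hcr₀ (by linarith)
  have hf : LowerSemicontinuous f :=
    (EReal.continuous_clampToReal hcR).comp_lowerSemicontinuous hlsc
      (EReal.monotone_clampToReal hcR)
  set l := 4 * ε / (3 * δ)
  have hl : 0 < l := by positivity
  obtain ⟨γ, hγ, x₁, hx₁s, hdist, hD, hval, hmin⟩ := exists_penalized_ekeland_point (f := f)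
    (D := fun x => infDist (x, y₀) (gphSet Φ)) (l := l) (hf.lowerSemicontinuousOn _)
    ((continuous_infDist_pt _).comp (continuous_id.prodMk continuous_const)).continuousOn
    (fun x _ => infDist_nonneg) (infDist_zero_of_mem hfeas) isClosed_closedBall hx₀s
    (fun x _ => EReal.le_clampToReal hcR _)
    (fun x hx => by
      rw [hfx₀]
      exact EReal.le_clampToReal_add hcR (by linarith) (mul_nonneg hγ₀.le infDist_nonneg)
        (hpen x hx)) hγ₀ hl hη
  have hx₁ : dist x₁ x₀ ≤ 3 * δ / 4 := by
    rw [div_mul_eq_mul_div, div_le_iff₀ (by positivity)] at hdist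
    nlinarith
  have hγD := mul_nonneg hγ.le (infDist_nonneg (x := (x₁, y₀)) (s := gphSet Φ))
  have hld := mul_nonneg hl.le (dist_nonneg (x := x₁) (y := x₀))
  -- the clamp is inactive at `x₁`, where `f x₁ ≤ r₀ < r₀ + 1`
  have hφx₁ : φ x₁ = f x₁ := (EReal.coe_clampToReal_of_lt hcR (hc x₁ hx₁s) (by linarith)).symm
  refine ⟨x₁, mem_ball.2 (by linarith), y₀, mem_ball_self hη, hD, γ, hγ, l / δ, by positivity,
    ?_, ?_⟩
  · have hsq : l / δ * dist x₁ x₀ ^ 2 ≤ l * dist x₁ x₀ := by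
      rw [div_mul_eq_mul_div, div_le_iff₀ hδ]
      nlinarith
    rw [phiGamma, hφx₁, hr₀, dist_self, zero_add, ← EReal.coe_add, ← EReal.coe_add]
    exact EReal.coe_le_coe (by linarith)
  · refine (limsup_slope_phiGamma_le (closedBall_mem_nhds_of_mem (mem_ball.2 (by linarith)))
      hγ.le hl.le (fun x hx => EReal.coe_clampToReal_le hcR (hc x hx)) hφx₁ hmin).trans_lt
      (EReal.coe_lt_coe ?_)
    rw [div_lt_div_iff₀ (by positivity) hδ]
    nlinarith

end PhiGamma

theorem eps_minimal_primal_local_condition_general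
    {X Y : Type*} [MetricSpace X] [CompleteSpace X] [MetricSpace Y]
    (Φ : X → Set Y)
    (φ : X → EReal) (hlsc : LowerSemicontinuous φ)
    (y₀ : Y) (x₀ : X) (hdom : φ x₀ ≠ ⊤) (hfeas : y₀ ∈ Φ x₀)
    (U : Set X) (ε δ : ℝ) (hε : 0 < ε) (hδ : 0 < δ)
    (hball : Metric.ball x₀ δ ⊆ U)
    -- φ is bounded from below on U
    (hbdd : ∃ c : ℝ, ∀ x ∈ U, (c : EReal) ≤ φ x)
    -- φ is lower semicontinuous on U relative to Φ at y₀ (sequential form)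
    (hrel : ∀ (x : ℕ → X) (y : ℕ → Y) (ρ : ℝ), 0 < ρ →
      (∀ k, Metric.ball (x k) ρ ⊆ U) →
      Filter.Tendsto y Filter.atTop (nhds y₀) →
      Filter.Tendsto (fun k => Metric.infDist (x k, y k) (gphSet Φ))
        Filter.atTop (nhds 0) →
      (⨅ u ∈ {x | y₀ ∈ Φ x} ∩ U, φ u) ≤
        Filter.liminf (fun k => φ (x k)) Filter.atTop)
    -- x₀ is an ε-minimal point of φ restricted to Φ⁻¹(y₀) on U
    (hmin : φ x₀ - (ε : EReal) < ⨅ u ∈ {x | y₀ ∈ Φ x} ∩ U, φ u) :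
    ∃ δ₀ : ℝ, 0 < δ₀ ∧ δ₀ < δ ∧ ∀ δ' : ℝ, δ₀ < δ' → δ' < δ → ∀ η : ℝ, 0 < η →
      ∃ x₁ ∈ Metric.ball x₀ δ', ∃ y₁ ∈ Metric.ball y₀ η,
        Metric.infDist (x₁, y₁) (gphSet Φ) < η ∧
        ∃ γ : ℝ, 0 < γ ∧ ∃ γ₁ : ℝ, 0 < γ₁ ∧
          phiGamma φ Φ y₀ γ x₁ y₁ + (((γ₁ * (dist x₁ x₀) ^ 2) : ℝ) : EReal) ≤ φ x₀ ∧
          Filter.limsup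
            (fun p : X × Y =>
              (phiGamma φ Φ y₀ γ x₁ y₁ - phiGamma φ Φ y₀ γ p.1 p.2) /
                ((dist p (x₁, y₁) : ℝ) : EReal))
            (𝓝[≠] (x₁, y₁)) < ((2 * ε / δ : ℝ) : EReal) := by
  obtain ⟨c, hc⟩ := hbdd
  have hx₀U : x₀ ∈ U := hball (mem_ball_self hδ)
  obtain ⟨r₀, hr₀⟩ : ∃ r : ℝ, φ x₀ = r :=
    ⟨_, (EReal.coe_toReal hdom (ne_bot_of_le_ne_bot (EReal.coe_ne_bot c) (hc x₀ hx₀U))).symm⟩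
  refine ⟨3 * δ / 4, by positivity, by linarith, fun δ' hδ₀' hδ' η hη => ?_⟩
  have hsU : closedBall x₀ δ' ⊆ U := (closedBall_subset_ball hδ').trans hball
  obtain ⟨γ₀, hγ₀, hpen⟩ := exists_forall_le_add_mul_of_le_liminf (s := closedBall x₀ δ') (f := φ)
    (D := fun x => infDist (x, y₀) (gphSet Φ)) (fun x _ => infDist_nonneg)
    (fun x hx => hc x (hsU hx))
    (fun u hu hDu => hrel u (fun _ => y₀) (δ - δ') (by linarith)
      (fun k => (ball_subset_ball' (by linarith [mem_closedBall.1 (hu k)])).trans hball)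
      tendsto_const_nhds hDu)
    (a := r₀ - ε) (by rwa [EReal.coe_sub, ← hr₀])
  exact exists_small_slope_point_of_penalty hlsc hfeas hr₀ (fun x hx => hc x (hsU hx)) hpen hγ₀
    hε hδ hδ₀' hη

/-- Theorem 4.1 / Remark 4.2 (primal local condition): necessary conditions for
`ε`-minimality of `x₀` for the problem `min { φ(x) | y₀ ∈ Φ(x) }` on `U`. -/
theorem eps_minimal_primal_local_condition
    {X Y : Type*} [MetricSpace X] [CompleteSpace X] [MetricSpace Y]
    (Φ : X → Set Y) (hΦcl : IsClosed (gphSet Φ))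
    (φ : X → EReal) (hlsc : LowerSemicontinuous φ) (hbot : ∀ x, φ x ≠ ⊥)
    (y₀ : Y) (x₀ : X) (hdom : φ x₀ ≠ ⊤) (hfeas : y₀ ∈ Φ x₀)
    (U : Set X) (ε δ : ℝ) (hε : 0 < ε) (hδ : 0 < δ)
    (hball : Metric.ball x₀ δ ⊆ U)
    -- φ is bounded from below on U
    (hbdd : ∃ c : ℝ, ∀ x ∈ U, (c : EReal) ≤ φ x)
    -- φ is lower semicontinuous on U relative to Φ at y₀ (sequential form)
    (hrel : ∀ (x : ℕ → X) (y : ℕ → Y) (ρ : ℝ), 0 < ρ →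
      (∀ k, Metric.ball (x k) ρ ⊆ U) →
      Filter.Tendsto y Filter.atTop (nhds y₀) →
      Filter.Tendsto (fun k => Metric.infDist (x k, y k) (gphSet Φ))
        Filter.atTop (nhds 0) →
      (⨅ u ∈ {x | y₀ ∈ Φ x} ∩ U, φ u) ≤
        Filter.liminf (fun k => φ (x k)) Filter.atTop)
    -- x₀ is an ε-minimal point of φ restricted to Φ⁻¹(y₀) on U
    (hmin : φ x₀ - (ε : EReal) < ⨅ u ∈ {x | y₀ ∈ Φ x} ∩ U, φ u) :
    ∃ δ₀ : ℝ, 0 < δ₀ ∧ δ₀ < δ ∧ ∀ δ' : ℝ, δ₀ < δ' → δ' < δ → ∀ η : ℝ, 0 < η →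
      ∃ x₁ ∈ Metric.ball x₀ δ', ∃ y₁ ∈ Metric.ball y₀ η,
        Metric.infDist (x₁, y₁) (gphSet Φ) < η ∧
        ∃ γ : ℝ, 0 < γ ∧ ∃ γ₁ : ℝ, 0 < γ₁ ∧
          phiGamma φ Φ y₀ γ x₁ y₁ + (((γ₁ * (dist x₁ x₀) ^ 2) : ℝ) : EReal) ≤ φ x₀ ∧
          Filter.limsup
            (fun p : X × Y =>
              (phiGamma φ Φ y₀ γ x₁ y₁ - phiGamma φ Φ y₀ γ p.1 p.2) /
                ((dist p (x₁, y₁) : ℝ) : EReal))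
            (𝓝[≠] (x₁, y₁)) < ((2 * ε / δ : ℝ) : EReal) :=
  eps_minimal_primal_local_condition_general Φ φ hlsc y₀ x₀ hdom hfeas U ε δ hε hδ hball hbdd hrel
    hmin
end

section
/- Consider in ℝ² the closed sets Ω₁ := {(x,y) | x ≥ 0, y = 0} and Ω₂ := {(x,y) | x ≥ 0, |y| ≥ e^{−x}} ∪ {(0,0)}. Then: (i) Ω₁ ∩ Ω₂ = {(0,0)}; (ii) for every t < 0, (Ω₁ − (t,0)) ∩ Ω₂ = ∅; and (iii) for every a ∈ ℝ² and every ρ > 0, (Ω₁ + ρ𝔹 − a) ∩ (Ω₂ + ρ𝔹) ≠ ∅, where 𝔹 is the open unit ball and A + ρ𝔹 denotes the open ρ-enlargement of A. -/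
open Metric Set

/-- The first set from Example 5.6: `Ω₁ = {(x, y) | x ≥ 0, y = 0}`. -/
def Omega1 : Set (ℝ × ℝ) := {p | 0 ≤ p.1 ∧ p.2 = 0}

/-- The second set from Example 5.6:
`Ω₂ = {(x, y) | x ≥ 0, |y| ≥ e^{-x}} ∪ {(0, 0)}`. -/
def Omega2 : Set (ℝ × ℝ) :=
  {p | 0 ≤ p.1 ∧ Real.exp (-p.1) ≤ |p.2|} ∪ {(0, 0)}

/-- The open `ρ`-enlargement `A + ρ𝔹 = {z | dist_A(z) < ρ}` of a set `A`. -/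
noncomputable def enlarge (A : Set (ℝ × ℝ)) (ρ : ℝ) : Set (ℝ × ℝ) :=
  {z | Metric.infDist z A < ρ}

/-- Example 5.6: (i) `Ω₁ ∩ Ω₂ = {(0,0)}`; (ii) `(Ω₁ - (t, 0)) ∩ Ω₂ = ∅` for every
`t < 0`; (iii) `(Ω₁ + ρ𝔹 - a) ∩ (Ω₂ + ρ𝔹) ≠ ∅` for all `a ∈ ℝ²` and `ρ > 0`. -/
theorem example_extremality_more_restrictive :
    (Omega1 ∩ Omega2 = {(0, 0)}) ∧
    (∀ t : ℝ, t < 0 →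
      ((fun z : ℝ × ℝ => z - (t, 0)) '' Omega1) ∩ Omega2 = ∅) ∧
    (∀ a : ℝ × ℝ, ∀ ρ : ℝ, 0 < ρ →
      (((fun z : ℝ × ℝ => z - a) '' enlarge Omega1 ρ) ∩ enlarge Omega2 ρ).Nonempty) := by
  refine ⟨?_, ?_, ?_⟩
  · ext p
    simp only [Omega1, Omega2, mem_inter_iff, mem_setOf_eq, mem_union, mem_singleton_iff]
    constructor
    · rintro ⟨⟨hx, hy⟩, h2⟩
      rcases h2 with ⟨_, habs⟩ | h
      · rw [hy] at habs
        simp at habs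
        exact absurd habs (Real.exp_pos _).not_ge
      · exact h
    · rintro rfl
      exact ⟨⟨le_refl 0, rfl⟩, Or.inr rfl⟩
  · intro t ht
    ext p
    simp only [mem_inter_iff, mem_image, mem_empty_iff_false, iff_false]
    rintro ⟨⟨q, ⟨hq1, hq2⟩, rfl⟩, h2⟩
    have hx : 0 < q.1 - t := by linarith
    have hy : (q - (t, 0)).2 = 0 := by simp [hq2]
    rcases h2 with ⟨_, habs⟩ | h
    · rw [hy] at habs
      simp at habs
      exact absurd habs (Real.exp_pos _).not_ge
    · have : (q - (t, 0)).1 = 0 := by rw [h]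
      simp at this
      linarith
  · intro a ρ hρ
    by_cases h : a.2 = 0
    · set x : ℝ := max (max 0 (-a.1)) (1 - Real.log ρ) with hxdef
      have hx0 : 0 ≤ x := le_trans (le_max_left 0 _) (le_max_left _ _)
      have hxa : -a.1 ≤ x := le_trans (le_max_right 0 _) (le_max_left _ _)
      have hxρ : Real.exp (-x) < ρ := by
        have h1 : 1 - Real.log ρ ≤ x := le_max_right _ _
        have : -x < Real.log ρ := by linarith
        calc Real.exp (-x) < Real.exp (Real.log ρ) := Real.exp_lt_exp.2 this
          _ = ρ := Real.exp_log hρ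
      refine ⟨(x, Real.exp (-x)), ⟨(x, Real.exp (-x)) + a, ?_, add_sub_cancel_right _ _⟩, ?_⟩
      · -- infDist ((x, exp(-x)) + a) Omega1 < ρ
        have hmem : ((x + a.1, 0) : ℝ × ℝ) ∈ Omega1 := ⟨by simpa using by linarith, rfl⟩
        have hd : dist ((x, Real.exp (-x)) + a) ((x + a.1, 0) : ℝ × ℝ) = Real.exp (-x) := by
          rw [Prod.dist_eq]
          simp [Real.dist_eq, h, abs_of_nonneg (Real.exp_pos (-x)).le]
          positivity
        have h1 := Metric.infDist_le_dist_of_mem (x := (x, Real.exp (-x)) + a) hmem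
        rw [hd] at h1
        exact lt_of_le_of_lt h1 hxρ
      · -- infDist (x, exp(-x)) Omega2 < ρ
        have hmem : ((x, Real.exp (-x)) : ℝ × ℝ) ∈ Omega2 := by
          left
          exact ⟨hx0, le_of_eq (abs_of_nonneg (Real.exp_pos _).le).symm⟩
        have := Metric.infDist_zero_of_mem hmem
        simpa [enlarge, this] using hρ
    · set x : ℝ := max (max 0 (-a.1)) (-Real.log |a.2|) with hxdef
      have hx0 : 0 ≤ x := le_trans (le_max_left 0 _) (le_max_left _ _)
      have hxa : -a.1 ≤ x := le_trans (le_max_right 0 _) (le_max_left _ _)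
      have ha2 : 0 < |a.2| := abs_pos.2 h
      have hxe : Real.exp (-x) ≤ |a.2| := by
        have h1 : -Real.log |a.2| ≤ x := le_max_right _ _
        calc Real.exp (-x) ≤ Real.exp (Real.log |a.2|) := Real.exp_le_exp.2 (by linarith)
          _ = |a.2| := Real.exp_log ha2
      refine ⟨(x, -a.2), ⟨(x, -a.2) + a, ?_, add_sub_cancel_right _ _⟩, ?_⟩
      · have hmem : ((x, -a.2) + a : ℝ × ℝ) ∈ Omega1 := by
          constructor
          · simpa using by linarith
          · simp
        have := Metric.infDist_zero_of_mem hmem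
        simpa [enlarge, this] using hρ
      · have hmem : ((x, -a.2) : ℝ × ℝ) ∈ Omega2 := by
          left
          exact ⟨hx0, by simpa using hxe⟩
        have := Metric.infDist_zero_of_mem hmem
        simpa [enlarge, this] using hρ
end

section
/- Consider the optimization problem min{ f(x) + q(x) | G(x) ∈ K } (no abstract set constraint, X = Y = C = ℝ) with f(x) = x, q ≡ 0, G(x) = x², K = (−∞, 0], and x̄ = 0. Then: (i) x̄ is the unique feasible point and hence the unique global minimizer; (ii) x̄ is not M-stationary, i.e., there is no λ ∈ N̄_K(G(x̄)) = [0, ∞) with f'(x̄) + G'(x̄)·λ = 0; (iii) x̄ is approximately stationary: setting x_k = 0, x'_k = −1/(2k), y_k = 1/(4k²), λ_k = k, one has x_k → 0, x'_k → 0, y_k → 0, λ_k ∈ N_K(G(x'_k) − y_k), and f'(x_k) + G'(x'_k)·λ_k = 0 for all k. -/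
/-!
The constraint `x² ≤ 0` forces `x = 0`, where `G'(0) = 0` annihilates every multiplier, so
M-stationarity would require `1 = 0`. Relaxing the constraint by `y_k = 1/(4k²)` puts
`x'_k = -1/(2k)` on the boundary of the perturbed constraint, where `G'(x'_k) = -1/k ≠ 0`, and the
diverging multiplier `λ_k = k` balances `f' = 1`.
-/

open Filter Topology

theorem tendsto_const_div_const_mul_of_tendsto_atTop {α : Type*} {l : Filter α} {g : α → ℝ}
    (hg : Tendsto g l atTop) (c a : ℝ) : Tendsto (fun x => c / (a * g x)) l (𝓝 0) := by
  simp only [← div_div]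
  exact tendsto_const_nhds.div_atTop hg

/-- Example 6.9: for the problem `min {x | x² ∈ (-∞, 0]}` in `ℝ` with `x₀ = 0`:
(i) `x₀ = 0` is the unique feasible point (hence the unique global minimizer);
(ii) `x₀` is not M-stationary: there is no `λ ∈ N̄_K(G(x₀)) = [0, ∞)` with
`f'(x₀) + G'(x₀)λ = 0`, i.e. `1 + 2·0·λ = 0`;
(iii) `x₀` is approximately stationary, witnessed by `x_k = 0`, `x'_k = -1/(2k)`,
`y_k = 1/(4k²)`, `λ_k = k`: these satisfy `x'_k → 0`, `y_k → 0`,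
`λ_k ∈ N_K(G(x'_k) - y_k)` (i.e. `G(x'_k) - y_k = 0` and `λ_k ≥ 0`), and
`f'(x_k) + G'(x'_k)λ_k = 0`. -/
theorem example_approximate_vs_M_stationarity :
    ({x : ℝ | x ^ 2 ≤ 0} = {0}) ∧
    (¬ ∃ l : ℝ, 0 ≤ l ∧ 1 + 2 * (0 : ℝ) * l = 0) ∧
    (Filter.Tendsto (fun k : ℕ => -1 / (2 * (k : ℝ))) Filter.atTop (nhds 0) ∧
     Filter.Tendsto (fun k : ℕ => 1 / (4 * (k : ℝ) ^ 2)) Filter.atTop (nhds 0) ∧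
     ∀ k : ℕ, 0 < k →
       (-1 / (2 * (k : ℝ))) ^ 2 - 1 / (4 * (k : ℝ) ^ 2) = 0 ∧
       (0 : ℝ) ≤ (k : ℝ) ∧
       1 + 2 * (-1 / (2 * (k : ℝ))) * (k : ℝ) = 0) := by
  have feasible_set : {x : ℝ | x ^ 2 ≤ 0} = {0} := Set.ext fun x => by simp
  have not_M_stationary : ¬ ∃ l : ℝ, 0 ≤ l ∧ 1 + 2 * (0 : ℝ) * l = 0 := by simp
  have hk_atTop : Tendsto (fun k : ℕ => (k : ℝ)) atTop atTop := tendsto_natCast_atTop_atTop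
  have hk2_atTop : Tendsto (fun k : ℕ => (k : ℝ) ^ 2) atTop atTop :=
    (tendsto_pow_atTop two_ne_zero).comp hk_atTop
  refine ⟨feasible_set, not_M_stationary,
    tendsto_const_div_const_mul_of_tendsto_atTop hk_atTop (-1) 2,
    tendsto_const_div_const_mul_of_tendsto_atTop hk2_atTop 1 4, fun k hk => ?_⟩
  have hk_ne : (k : ℝ) ≠ 0 := by positivity
  exact ⟨by field_simp; ring, k.cast_nonneg, by field_simp; ring⟩
end

section
/- Let D ⊂ ℝ^d be a bounded measurable set, p ∈ (0,1), u_a, u_b ∈ L²(D) with u_a < 0 < u_b a.e., C := {u ∈ L²(D) | u_a ≤ u ≤ u_b a.e.}, and ū ∈ C. Suppose η, ξ_k, μ_k, u_k, u'_k ∈ L²(D) satisfy, after passing to subsequences realizing pointwise a.e. convergence: u_k(ω) → ū(ω), u'_k(ω) → ū(ω), and (ξ_k + μ_k)(ω) → η(ω) a.e., where ξ_k = p|u_k|^{p−2}u_k a.e. on {u_k ≠ 0}, μ_k ≤ 0 a.e. on {u'_k < u_b}, and μ_k ≥ 0 a.e. on {u_a < u'_k}. Then: η ≤ p|ū|^{p−2}ū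 a.e. on {ū = u_a}, η ≥ p|ū|^{p−2}ū a.e. on {ū = u_b}, and η = p|ū|^{p−2}ū a.e. on {ū ≠ 0} ∩ {u_a < ū < u_b}. -/
open Filter MeasureTheory Set Topology

/-! Fix a point `ω` off a null set. Where `ū(ω) ≠ 0`, eventually `u_k(ω) ≠ 0`, so
`ξ_k(ω) = p|u_k(ω)|^{p-2}u_k(ω) → p|ū(ω)|^{p-2}ū(ω)` by continuity of `t ↦ p|t|^{p-2}t`
away from `0`. Since `u'_k(ω) → ū(ω)`, a strict inequality `ū(ω) < u_b(ω)` (resp.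
`u_a(ω) < ū(ω)`) holds eventually for `u'_k(ω)` and forces `ν_k(ω) ≤ 0` (resp. `≥ 0`);
passing to the limit in `ξ_k + ν_k → η` gives the one-sided bounds, and both together
in the interior. At `ū = u_a` and `ū = u_b` we have `ū ≠ 0` because `u_a < 0 < u_b`. -/

theorem continuousAt_mul_abs_rpow_mul (c q : ℝ) {t : ℝ} (ht : t ≠ 0) :
    ContinuousAt (fun s : ℝ => c * |s| ^ q * s) t :=
  (continuousAt_const.mul
    (continuous_abs.continuousAt.rpow_const (Or.inl (abs_ne_zero.2 ht)))).mul continuousAt_id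

theorem tendsto_of_eq_comp_of_ne_zero {α β : Type*} [TopologicalSpace β] {l : Filter α}
    {f : ℝ → β} {x : ℝ} {u : α → ℝ} {ξ : α → β} (hf : ContinuousAt f x)
    (hu : Tendsto u l (𝓝 x)) (hx : x ≠ 0) (hξ : ∀ k, u k ≠ 0 → ξ k = f (u k)) :
    Tendsto ξ l (𝓝 (f x)) :=
  (hf.tendsto.comp hu).congr' <| (hu.eventually_ne hx).mono fun k hk => (hξ k hk).symm

theorem le_of_tendsto_add_of_eventually_nonpos {α : Type*} {l : Filter α} [l.NeBot]
    {ξ ν : α → ℝ} {L y : ℝ} (hξ : Tendsto ξ l (𝓝 L))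
    (hsum : Tendsto (fun k => ξ k + ν k) l (𝓝 y)) (hν : ∀ᶠ k in l, ν k ≤ 0) : y ≤ L :=
  le_of_tendsto_of_tendsto hsum hξ <| hν.mono fun _ hk => add_le_of_nonpos_right hk

theorem le_of_tendsto_add_of_eventually_nonneg {α : Type*} {l : Filter α} [l.NeBot]
    {ξ ν : α → ℝ} {L y : ℝ} (hξ : Tendsto ξ l (𝓝 L))
    (hsum : Tendsto (fun k => ξ k + ν k) l (𝓝 y)) (hν : ∀ᶠ k in l, 0 ≤ ν k) : L ≤ y :=
  le_of_tendsto_of_tendsto hξ hsum <| hν.mono fun _ hk => le_add_of_nonneg_right hk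

theorem sparse_control_uniform_qualification_pointwise_general
    (d : ℕ)
    (μmeas : Measure (EuclideanSpace ℝ (Fin d)))
    (p : ℝ)
    (ua ub ubar η : EuclideanSpace ℝ (Fin d) → ℝ)
    (u u' ξ ν : ℕ → EuclideanSpace ℝ (Fin d) → ℝ)
    (hbounds : ∀ᵐ ω ∂μmeas, ua ω < 0 ∧ 0 < ub ω)
    (hconv : ∀ᵐ ω ∂μmeas,
      Filter.Tendsto (fun k => u k ω) Filter.atTop (nhds (ubar ω)) ∧
      Filter.Tendsto (fun k => u' k ω) Filter.atTop (nhds (ubar ω)) ∧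
      Filter.Tendsto (fun k => ξ k ω + ν k ω) Filter.atTop (nhds (η ω)))
    (hstruct : ∀ᵐ ω ∂μmeas, ∀ k,
      (u k ω ≠ 0 → ξ k ω = p * |u k ω| ^ (p - 2) * u k ω) ∧
      (u' k ω < ub ω → ν k ω ≤ 0) ∧
      (ua ω < u' k ω → 0 ≤ ν k ω)) :
    ∀ᵐ ω ∂μmeas,
      (ubar ω = ua ω → η ω ≤ p * |ubar ω| ^ (p - 2) * ubar ω) ∧
      (ubar ω = ub ω → p * |ubar ω| ^ (p - 2) * ubar ω ≤ η ω) ∧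
      (ubar ω ≠ 0 → ua ω < ubar ω → ubar ω < ub ω →
        η ω = p * |ubar ω| ^ (p - 2) * ubar ω) := by
  filter_upwards [hbounds, hconv, hstruct] with ω ⟨hua, hub⟩ ⟨hu, hu', hsum⟩ hs
  have hξ (hne : ubar ω ≠ 0) :
      Tendsto (fun k => ξ k ω) atTop (𝓝 (p * |ubar ω| ^ (p - 2) * ubar ω)) :=
    tendsto_of_eq_comp_of_ne_zero (f := fun t => p * |t| ^ (p - 2) * t)
      (continuousAt_mul_abs_rpow_mul p (p - 2) hne) hu hne fun k => (hs k).1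
  have hν_nonpos (h : ubar ω < ub ω) : ∀ᶠ k in atTop, ν k ω ≤ 0 :=
    (hu'.eventually_lt_const h).mono fun k hk => (hs k).2.1 hk
  have hν_nonneg (h : ua ω < ubar ω) : ∀ᶠ k in atTop, 0 ≤ ν k ω :=
    (hu'.eventually_const_lt h).mono fun k hk => (hs k).2.2 hk
  refine ⟨fun h => ?_, fun h => ?_, fun hne h₁ h₂ => ?_⟩
  · exact le_of_tendsto_add_of_eventually_nonpos (hξ (h ▸ hua.ne)) hsum
      (hν_nonpos (h ▸ hua.trans hub))
  · exact le_of_tendsto_add_of_eventually_nonneg (hξ (h ▸ hub.ne')) hsum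
      (hν_nonneg (h ▸ hua.trans hub))
  · exact le_antisymm (le_of_tendsto_add_of_eventually_nonpos (hξ hne) hsum (hν_nonpos h₂))
      (le_of_tendsto_add_of_eventually_nonneg (hξ hne) hsum (hν_nonneg h₁))

/-- Pointwise a.e. core of Lemma 6.15 (uniform qualification condition for the
sparsity-promoting optimal control problem). Let `D ⊆ ℝ^d` be a bounded measurable
set, `p ∈ (0, 1)`, `u_a < 0 < u_b` a.e. on `D`, `ū` feasible (`u_a ≤ ū ≤ u_b` a.e.),
all functions square integrable over `D`. Suppose a.e. `u_k → ū`, `u'_k → ū`,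
`ξ_k + μ_k → η` pointwise, where `ξ_k = p|u_k|^{p-2}u_k` on `{u_k ≠ 0}`,
`μ_k ≤ 0` on `{u'_k < u_b}` and `μ_k ≥ 0` on `{u_a < u'_k}`. Then a.e.:
`η ≤ p|ū|^{p-2}ū` on `{ū = u_a}`, `η ≥ p|ū|^{p-2}ū` on `{ū = u_b}`, and
`η = p|ū|^{p-2}ū` on `{ū ≠ 0} ∩ {u_a < ū < u_b}`. -/
theorem sparse_control_uniform_qualification_pointwise
    (d : ℕ) (D : Set (EuclideanSpace ℝ (Fin d)))
    (hDb : Bornology.IsBounded D) (hDm : MeasurableSet D)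
    (μmeas : Measure (EuclideanSpace ℝ (Fin d)))
    (hμ : μmeas = MeasureTheory.volume.restrict D)
    (p : ℝ) (hp0 : 0 < p) (hp1 : p < 1)
    (ua ub ubar η : EuclideanSpace ℝ (Fin d) → ℝ)
    (u u' ξ ν : ℕ → EuclideanSpace ℝ (Fin d) → ℝ)
    (hua : MeasureTheory.MemLp ua 2 μmeas) (hub : MeasureTheory.MemLp ub 2 μmeas)
    (hubar : MeasureTheory.MemLp ubar 2 μmeas) (hη : MeasureTheory.MemLp η 2 μmeas)
    (hu : ∀ k, MeasureTheory.MemLp (u k) 2 μmeas)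
    (hu' : ∀ k, MeasureTheory.MemLp (u' k) 2 μmeas)
    (hξ : ∀ k, MeasureTheory.MemLp (ξ k) 2 μmeas)
    (hν : ∀ k, MeasureTheory.MemLp (ν k) 2 μmeas)
    (hbounds : ∀ᵐ ω ∂μmeas, ua ω < 0 ∧ 0 < ub ω)
    (hfeas : ∀ᵐ ω ∂μmeas, ua ω ≤ ubar ω ∧ ubar ω ≤ ub ω)
    (hconv : ∀ᵐ ω ∂μmeas,
      Filter.Tendsto (fun k => u k ω) Filter.atTop (nhds (ubar ω)) ∧
      Filter.Tendsto (fun k => u' k ω) Filter.atTop (nhds (ubar ω)) ∧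
      Filter.Tendsto (fun k => ξ k ω + ν k ω) Filter.atTop (nhds (η ω)))
    (hstruct : ∀ᵐ ω ∂μmeas, ∀ k,
      (u k ω ≠ 0 → ξ k ω = p * |u k ω| ^ (p - 2) * u k ω) ∧
      (u' k ω < ub ω → ν k ω ≤ 0) ∧
      (ua ω < u' k ω → 0 ≤ ν k ω)) :
    ∀ᵐ ω ∂μmeas,
      (ubar ω = ua ω → η ω ≤ p * |ubar ω| ^ (p - 2) * ubar ω) ∧
      (ubar ω = ub ω → p * |ubar ω| ^ (p - 2) * ubar ω ≤ η ω) ∧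
      (ubar ω ≠ 0 → ua ω < ubar ω → ubar ω < ub ω →
        η ω = p * |ubar ω| ^ (p - 2) * ubar ω) :=
  sparse_control_uniform_qualification_pointwise_general d μmeas p ua ub ubar η u u' ξ ν hbounds
    hconv hstruct
end
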